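/- Let C ⊆ S²_B Λ²ℝⁿ (n ≥ 4) be a curvature cone whose maximal contained subspace V equals the trace-zero hyperplane S²₀ℝⁿ∧id ⊕ W. Then C equals the half-space {R ∈ S²_B Λ²ℝⁿ : tr R ≥ 0}. -/

import Mathlib

open Matrix

noncomputable section

/-- The ambient space of 4-tensors on ℝⁿ; a curvature operator R on Λ²ℝⁿ is recorded
by its components R i j k l = ⟨R(eᵢ∧eⱼ), eₖ∧eₗ⟩. -/
abbrev Tn (n : ℕ) : Type := Fin n → Fin n → Fin n → Fin n → ℝ

/-- The space S²_BΛ²ℝⁿ of algebraic curvature operators: symmetric endomorphisms of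
Λ²ℝⁿ (antisymmetry in the first and last pairs, symmetry in exchanging the pairs)
satisfying the first Bianchi identity. -/
def CurvOp (n : ℕ) : Submodule ℝ (Tn n) where
  carrier := {R | (∀ i j k l, R j i k l = -R i j k l) ∧
    (∀ i j k l, R i j l k = -R i j k l) ∧
    (∀ i j k l, R k l i j = R i j k l) ∧
    (∀ i j k l, R i j k l + R k i j l + R j k i l = 0)}
  add_mem' := by
    rintro a b ⟨ha1, ha2, ha3, ha4⟩ ⟨hb1, hb2, hb3, hb4⟩
    refine ⟨fun i j k l => ?_, fun i j k l => ?_, fun i j k l => ?_, fun i j k l => ?_⟩ <;>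
      simp only [Pi.add_apply]
    · linear_combination ha1 i j k l + hb1 i j k l
    · linear_combination ha2 i j k l + hb2 i j k l
    · linear_combination ha3 i j k l + hb3 i j k l
    · linear_combination ha4 i j k l + hb4 i j k l
  zero_mem' := ⟨fun _ _ _ _ => by simp, fun _ _ _ _ => by simp,
    fun _ _ _ _ => by simp, fun _ _ _ _ => by simp⟩
  smul_mem' := by
    rintro c a ⟨ha1, ha2, ha3, ha4⟩
    refine ⟨fun i j k l => ?_, fun i j k l => ?_, fun i j k l => ?_, fun i j k l => ?_⟩ <;>
      simp only [Pi.smul_apply, smul_eq_mul]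
    · linear_combination c * ha1 i j k l
    · linear_combination c * ha2 i j k l
    · linear_combination c * ha3 i j k l
    · linear_combination c * ha4 i j k l

/-- The action of g ∈ O(n) on curvature operators:
(g·R) i j k l = ⟨R(geᵢ∧geⱼ), geₖ∧geₗ⟩. -/
def act {n : ℕ} (g : Matrix (Fin n) (Fin n) ℝ) (R : Tn n) : Tn n :=
  fun i j k l => ∑ a, ∑ b, ∑ c, ∑ d, R a b c d * g a i * g b j * g c k * g d l

/-- The trace of a curvature operator (as an endomorphism of Λ²ℝⁿ); the scalar
curvature is twice this. -/
def trT {n : ℕ} (R : Tn n) : ℝ := (∑ i, ∑ j, R i j i j) / 2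

/-- The identity operator Id of Λ²ℝⁿ, as a 4-tensor. -/
def IdT (n : ℕ) : Tn n := fun i j k l =>
  (if i = k then (1 : ℝ) else 0) * (if j = l then 1 else 0)
    - (if i = l then (1 : ℝ) else 0) * (if j = k then 1 else 0)

/-- The Ricci tensor of a curvature operator. -/
def ricT {n : ℕ} (R : Tn n) (i k : Fin n) : ℝ := ∑ j, R i j k j

/-- The Weyl space W: curvature operators with vanishing Ricci tensor. -/
def WeylSet (n : ℕ) : Set (Tn n) :=
  {R | R ∈ CurvOp n ∧ ∀ i k, ricT R i k = 0}

/-- The tensor of A∧B, (A∧B)(x∧y) = (1/2)(Ax∧By + Bx∧Ay), for symmetric matrices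
A, B. -/
def wedgeT {n : ℕ} (A B : Matrix (Fin n) (Fin n) ℝ) : Tn n := fun i j k l =>
  (A k i * B l j - A l i * B k j + B k i * A l j - B l i * A k j) / 2

/-- The space S²₀ℝⁿ∧id of curvature operators A₀∧id with A₀ traceless symmetric
(equivalently: conformally flat scalar flat curvature operators). -/
def S20Set (n : ℕ) : Set (Tn n) :=
  {R | ∃ A : Matrix (Fin n) (Fin n) ℝ, Aᵀ = A ∧ A.trace = 0 ∧ R = wedgeT A 1}

/-- A curvature cone: a closed convex cone C ⊆ S²_BΛ²ℝⁿ, invariant under the action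
of O(n), with Id in its interior (interior relative to S²_BΛ²ℝⁿ). -/
def IsCurvCone (n : ℕ) (C : Set (Tn n)) : Prop :=
  C ⊆ (CurvOp n : Set (Tn n)) ∧ IsClosed C ∧ Convex ℝ C ∧
    (∀ x ∈ C, ∀ r : ℝ, 0 ≤ r → r • x ∈ C) ∧
    (∀ g : Matrix (Fin n) (Fin n) ℝ, g * gᵀ = 1 → gᵀ * g = 1 →
      ∀ R ∈ C, act g R ∈ C) ∧
    (∃ ε > (0 : ℝ), ∀ R ∈ CurvOp n, ‖R - IdT n‖ < ε → R ∈ C)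


/-!
The trace-zero hyperplane `V` lies in `C`, so `C` is a union of parallel translates of `V`
determined by the traces of its points. Since `Id ∈ C` has positive trace, `C` contains the
half-space `tr ≥ 0`. If `C` also contained a point of negative trace it would be all of
`S²_BΛ²ℝⁿ`, a subspace strictly larger than `V` (it contains `Id`), contradicting maximality.
-/

namespace PointedCone

variable {M : Type*} [AddCommGroup M] [Module ℝ M] (K : PointedCone ℝ M) (P : Submodule ℝ M)
  (f : M →ₗ[ℝ] ℝ)

/-- Write `y = (y - t • x) + t • x` with `t = f y / f x ≥ 0`, the first summand lying in the
hyperplane. -/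
theorem mem_of_div_nonneg (hker : ∀ z ∈ P, f z = 0 → z ∈ K) {x y : M} (hxK : x ∈ K)
    (hxP : x ∈ P) (hyP : y ∈ P) (hfx : f x ≠ 0) (hxy : 0 ≤ f y / f x) : y ∈ K := by
  have hperp : y - (f y / f x) • x ∈ K :=
    hker _ (P.sub_mem hyP (P.smul_mem _ hxP)) (by simp [hfx])
  simpa using K.add_mem hperp (K.smul_mem hxy hxK)

theorem halfSpace_subset (hker : ∀ z ∈ P, f z = 0 → z ∈ K) {x : M} (hxK : x ∈ K)
    (hxP : x ∈ P) (hfx : 0 < f x) : {y | y ∈ P ∧ 0 ≤ f y} ⊆ K :=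
  fun _ ⟨hyP, hy⟩ => K.mem_of_div_nonneg P f hker hxK hxP hyP hfx.ne' (div_nonneg hy hfx.le)

theorem subset_of_pos_of_neg (hker : ∀ z ∈ P, f z = 0 → z ∈ K) {x w : M} (hxK : x ∈ K)
    (hxP : x ∈ P) (hfx : 0 < f x) (hwK : w ∈ K) (hwP : w ∈ P) (hfw : f w < 0) :
    (P : Set M) ⊆ K := by
  intro y hyP
  rcases le_or_gt 0 (f y) with hy | hy
  · exact K.mem_of_div_nonneg P f hker hxK hxP hyP hfx.ne' (div_nonneg hy hfx.le)
  · exact K.mem_of_div_nonneg P f hker hwK hwP hyP hfw.ne (div_nonneg_of_nonpos hy.le hfw.le)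

end PointedCone

theorem IdT_mem_curvOp (n : ℕ) : IdT n ∈ CurvOp n := by
  refine ⟨fun i j k l => ?_, fun i j k l => ?_, fun i j k l => ?_, fun i j k l => ?_⟩
  · simp only [IdT]; ring
  · simp only [IdT]; ring
  · simp only [IdT, eq_comm]; ring
  · simp only [IdT, eq_comm]; ring

def trTLinearMap (n : ℕ) : Tn n →ₗ[ℝ] ℝ where
  toFun := trT
  map_add' a b := by simp only [trT, Pi.add_apply, Finset.sum_add_distrib]; ring
  map_smul' c a := by
    simp only [trT, Pi.smul_apply, smul_eq_mul, ← Finset.mul_sum, RingHom.id_apply]; ring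

theorem trT_IdT (n : ℕ) : trT (IdT n) = n * (n - 1) / 2 := by
  simp [trT, IdT, Finset.sum_sub_distrib]; ring

theorem trT_IdT_pos {n : ℕ} (hn : 2 ≤ n) : 0 < trT (IdT n) := by
  have : (2 : ℝ) ≤ n := by exact_mod_cast hn
  rw [trT_IdT]; nlinarith

namespace IsCurvCone

variable {n : ℕ} {C : Set (Tn n)}

theorem subset_curvOp (hC : IsCurvCone n C) : C ⊆ CurvOp n := hC.1

theorem smul_mem (hC : IsCurvCone n C) {x : Tn n} (hx : x ∈ C) {r : ℝ} (hr : 0 ≤ r) :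
    r • x ∈ C :=
  hC.2.2.2.1 x hx r hr

theorem IdT_mem (hC : IsCurvCone n C) : IdT n ∈ C := by
  obtain ⟨-, -, -, -, -, ε, hε, hball⟩ := hC
  exact hball _ (IdT_mem_curvOp n) (by simpa using hε)

theorem add_mem (hC : IsCurvCone n C) {x y : Tn n} (hx : x ∈ C) (hy : y ∈ C) : x + y ∈ C := by
  have hmid : (1 / 2 : ℝ) • x + (1 / 2 : ℝ) • y ∈ C :=
    hC.2.2.1 hx hy (by norm_num) (by norm_num) (by norm_num)
  have hdouble : (2 : ℝ) • ((1 / 2 : ℝ) • x + (1 / 2 : ℝ) • y) = x + y := by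
    rw [smul_add, smul_smul, smul_smul]; norm_num
  simpa only [hdouble] using hC.smul_mem hmid (by norm_num : (0 : ℝ) ≤ 2)

def toPointedCone (hC : IsCurvCone n C) : PointedCone ℝ (Tn n) where
  carrier := C
  add_mem' := hC.add_mem
  zero_mem' := by simpa using hC.smul_mem hC.IdT_mem le_rfl
  smul_mem' c _ hx := hC.smul_mem hx c.2

end IsCurvCone

/-- Let C ⊆ S²_BΛ²ℝⁿ (n ≥ 4) be a curvature cone whose maximal contained
vector subspace V equals the trace-zero hyperplane S²₀ℝⁿ∧id ⊕ W.  Then C equals the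
half-space {R ∈ S²_BΛ²ℝⁿ : tr R ≥ 0}. -/
theorem stmt15 (n : ℕ) (hn : 4 ≤ n) (C : Set (Tn n)) (hC : IsCurvCone n C)
    (V : Submodule ℝ (Tn n)) (hVC : (V : Set (Tn n)) ⊆ C)
    (hmax : ∀ W : Submodule ℝ (Tn n), (W : Set (Tn n)) ⊆ C → W ≤ V)
    (hV : (V : Set (Tn n)) = {R | R ∈ CurvOp n ∧ trT R = 0}) :
    C = {R | R ∈ CurvOp n ∧ 0 ≤ trT R} := by
  set K := hC.toPointedCone
  have hker : ∀ R ∈ CurvOp n, trTLinearMap n R = 0 → R ∈ K :=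
    fun R hR h0 => hVC (hV ▸ ⟨hR, h0⟩)
  have hIdK : IdT n ∈ K := hC.IdT_mem
  have hId : 0 < trT (IdT n) := trT_IdT_pos (by omega)
  refine Set.Subset.antisymm (fun R hR => ⟨hC.subset_curvOp hR, ?_⟩)
    (K.halfSpace_subset _ _ hker hIdK (IdT_mem_curvOp n) hId)
  by_contra hneg
  have hall : (CurvOp n : Set (Tn n)) ⊆ C :=
    K.subset_of_pos_of_neg _ _ hker hIdK (IdT_mem_curvOp n) hId hR (hC.subset_curvOp hR)
      (not_le.mp hneg)
  have hIdV : IdT n ∈ (V : Set (Tn n)) := hmax _ hall (IdT_mem_curvOp n)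
  rw [hV] at hIdV
  exact hId.ne' hIdV.2
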